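/- arXiv:2008.03566 — 5 statements merged into one kernel-verified Lean document; each statement's English description precedes it below -/
import Mathlib

section
/- Let h : ℝ → ℝ be a C² function with h″(ψ) + h(ψ) > 0 for all ψ, and define S(φ, φ₁) = 2·h((φ + φ₁)/2)·sin((φ₁ − φ)/2). Then for all φ, φ₁ with 0 < (φ₁ − φ)/2 < π, the mixed second partial derivative satisfies ∂²S/∂φ∂φ₁ (φ, φ₁) = (1/2)·(h″(ψ) + h(ψ))·sin δ > 0, where ψ = (φ + φ₁)/2 and δ = (φ₁ − φ)/2. -/
/-!
In the coordinates `ψ = (φ + φ₁)/2`, `δ = (φ₁ - φ)/2` the generating function is `2 h(ψ) sin δ`.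
Differentiating in `φ₁` gives `h'(ψ) sin δ + h(ψ) cos δ`; differentiating that in `φ`, the two
`h'(ψ) cos δ` terms cancel and what remains is `½ (h''(ψ) + h(ψ)) sin δ`, which is positive since
`ρ = h'' + h > 0` and `0 < δ < π`.
-/

open Real

/-- The non-standard generating function for the billiard ball map:
`S(φ, φ₁) = 2 h((φ+φ₁)/2) sin((φ₁−φ)/2)`. -/
noncomputable def Sgen (h : ℝ → ℝ) (φ φ₁ : ℝ) : ℝ :=
  2 * h ((φ + φ₁) / 2) * Real.sin ((φ₁ - φ) / 2)

section HalfSumDiff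

variable {f : ℝ → ℝ} {f' x y : ℝ}

lemma HasDerivAt.comp_half_add_left (hf : HasDerivAt f f' ((x + y) / 2)) :
    HasDerivAt (fun x => f ((x + y) / 2)) (f' / 2) x :=
  (hf.comp x (((hasDerivAt_id' x).add_const y).div_const 2)).congr_deriv (by ring)

lemma HasDerivAt.comp_half_add_right (hf : HasDerivAt f f' ((x + y) / 2)) :
    HasDerivAt (fun y => f ((x + y) / 2)) (f' / 2) y :=
  (hf.comp y (((hasDerivAt_id' y).const_add x).div_const 2)).congr_deriv (by ring)

lemma HasDerivAt.comp_half_sub_left (hf : HasDerivAt f f' ((y - x) / 2)) :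
    HasDerivAt (fun x => f ((y - x) / 2)) (-(f' / 2)) x :=
  (hf.comp x (((hasDerivAt_id' x).const_sub y).div_const 2)).congr_deriv (by ring)

lemma HasDerivAt.comp_half_sub_right (hf : HasDerivAt f f' ((y - x) / 2)) :
    HasDerivAt (fun y => f ((y - x) / 2)) (f' / 2) y :=
  (hf.comp y (((hasDerivAt_id' y).sub_const x).div_const 2)).congr_deriv (by ring)

end HalfSumDiff

section Sgen

variable {h : ℝ → ℝ} {x y : ℝ}

lemma hasDerivAt_Sgen_right {h' : ℝ} (hh : HasDerivAt h h' ((x + y) / 2)) :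
    HasDerivAt (fun y => Sgen h x y)
      (h' * sin ((y - x) / 2) + h ((x + y) / 2) * cos ((y - x) / 2)) y := by
  have := (hh.comp_half_add_right.const_mul 2).mul
    (hasDerivAt_sin ((y - x) / 2)).comp_half_sub_right
  exact this.congr_deriv (by ring)

lemma deriv_Sgen_right (hh : Differentiable ℝ h) :
    (fun x => deriv (fun y => Sgen h x y) y)
      = fun x => deriv h ((x + y) / 2) * sin ((y - x) / 2) + h ((x + y) / 2) * cos ((y - x) / 2) :=
  funext fun _ => (hasDerivAt_Sgen_right (hh _).hasDerivAt).deriv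

lemma hasDerivAt_deriv_Sgen_right {h'' : ℝ} (hh : Differentiable ℝ h)
    (hh' : HasDerivAt (deriv h) h'' ((x + y) / 2)) :
    HasDerivAt (fun x => deriv (fun y => Sgen h x y) y)
      ((1 / 2) * (h'' + h ((x + y) / 2)) * sin ((y - x) / 2)) x := by
  rw [deriv_Sgen_right hh]
  have := (hh'.comp_half_add_left.mul (hasDerivAt_sin ((y - x) / 2)).comp_half_sub_left).add
    ((hh ((x + y) / 2)).hasDerivAt.comp_half_add_left.mul
      (hasDerivAt_cos ((y - x) / 2)).comp_half_sub_left)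
  exact this.congr_deriv (by ring)

end Sgen

/-- Twist condition: if the radius of curvature `h'' + h` is positive, then the mixed
second partial derivative of `S` equals `(1/2)(h''(ψ)+h(ψ)) sin δ` and is positive for
`0 < δ < π`. -/
theorem stmt_2 (h : ℝ → ℝ) (hh : ContDiff ℝ 2 h)
    (hρ : ∀ ψ : ℝ, deriv (deriv h) ψ + h ψ > 0)
    (φ φ₁ : ℝ) (hδ₀ : 0 < (φ₁ - φ)/2) (hδπ : (φ₁ - φ)/2 < Real.pi) :
    deriv (fun x => deriv (fun y => Sgen h x y) φ₁) φ
      = (1/2) * (deriv (deriv h) ((φ + φ₁)/2) + h ((φ + φ₁)/2)) * Real.sin ((φ₁ - φ)/2) ∧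
    0 < deriv (fun x => deriv (fun y => Sgen h x y) φ₁) φ := by
  have mixed := (hasDerivAt_deriv_Sgen_right (x := φ) (y := φ₁) (hh.differentiable two_ne_zero)
    (hh.differentiable_deriv_two _).hasDerivAt).deriv
  refine ⟨mixed, ?_⟩
  have hsin : 0 < sin ((φ₁ - φ) / 2) := sin_pos_of_pos_of_lt_pi hδ₀ hδπ
  have hρψ := hρ ((φ + φ₁) / 2)
  rw [mixed]
  positivity
end

section
/- Let h : ℝ → ℝ be a C¹ function with h(ψ) > 0 for all ψ, and let d : ℝ → ℝ satisfy 0 < d(ψ) < π/2 and d(ψ + π/2) = π/2 − d(ψ) for all ψ. Assume that for all ψ: h(ψ)·cos d(ψ) + h′(ψ)·sin d(ψ) = h(ψ + π/2)·cos d(ψ + π/2) − h′(ψ + π/2)·sin d(ψ + π/2), and h(ψ)·cos d(ψ) − h′(ψ)·sin d(ψ) = h(ψ + π/2)·cos d(ψ + π/2) + h′(ψ + π/2)·sin d(ψ + π/2). Then for all ψ: (i) h(ψ + π/2)·sin d(ψ) = h(ψ)·cos d(ψ); (ii) h′(ψ)·sin d(ψ) = −h′(ψ + π/2)·cos d(ψ);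 and (iii) there exists a constant R² such that h(ψ)² + h(ψ + π/2)² = R² for all ψ. -/
/-!
Adding and subtracting the two relations, after rewriting `cos d(ψ + π/2) = sin d(ψ)` and
`sin d(ψ + π/2) = cos d(ψ)`, gives (i) and (ii). These say that `(h ψ, h (ψ + π/2))` is
parallel to `(sin d, cos d)` and `(h' ψ, h' (ψ + π/2))` to `(cos d, -sin d)`, so the two
vectors are orthogonal. Their inner product is half the derivative of
`h ψ ^ 2 + h (ψ + π/2) ^ 2`, which is therefore constant.
-/

open Real

lemma mul_add_mul_eq_zero_of_mul_sin_eq {a b a' b' θ : ℝ}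
    (hab : b * sin θ = a * cos θ) (hab' : a' * sin θ = -b' * cos θ) :
    a * a' + b * b' = 0 := by
  linear_combination (b' * sin θ - a' * cos θ) * hab + (a * sin θ + b * cos θ) * hab'
    - (a * a' + b * b') * sin_sq_add_cos_sq θ

lemma hasDerivAt_sq_add_sq_comp_add {f : ℝ → ℝ} (hf : Differentiable ℝ f) (T x : ℝ) :
    HasDerivAt (fun y => f y ^ 2 + f (y + T) ^ 2)
      (2 * (f x * deriv f x + f (x + T) * deriv f (x + T))) x := by
  have hshift : HasDerivAt (fun y => f (y + T)) (deriv f (x + T)) x :=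
    (hf (x + T)).hasDerivAt.comp_add_const x T
  refine (((hf x).hasDerivAt.fun_pow 2).fun_add (hshift.fun_pow 2)).congr_deriv ?_
  simp only [Nat.cast_ofNat, Nat.add_one_sub_one, pow_one]
  ring

lemma exists_sq_add_sq_comp_add_eq {f : ℝ → ℝ} (hf : Differentiable ℝ f) (T : ℝ)
    (horth : ∀ x, f x * deriv f x + f (x + T) * deriv f (x + T) = 0) :
    ∃ C, ∀ x, f x ^ 2 + f (x + T) ^ 2 = C := by
  refine ⟨f 0 ^ 2 + f (0 + T) ^ 2, fun x => ?_⟩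
  refine is_const_of_deriv_eq_zero (f := fun y => f y ^ 2 + f (y + T) ^ 2)
    (fun y => (hasDerivAt_sq_add_sq_comp_add hf T y).differentiableAt) (fun y => ?_) x 0
  rw [(hasDerivAt_sq_add_sq_comp_add hf T y).deriv, horth, mul_zero]

theorem stmt_4_general (h d : ℝ → ℝ) (hh : ContDiff ℝ 1 h)
    (hdsym : ∀ ψ : ℝ, d (ψ + Real.pi / 2) = Real.pi / 2 - d ψ)
    (heq1 : ∀ ψ : ℝ,
      h ψ * Real.cos (d ψ) + deriv h ψ * Real.sin (d ψ)
        = h (ψ + Real.pi / 2) * Real.cos (d (ψ + Real.pi / 2))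
          - deriv h (ψ + Real.pi / 2) * Real.sin (d (ψ + Real.pi / 2)))
    (heq2 : ∀ ψ : ℝ,
      h ψ * Real.cos (d ψ) - deriv h ψ * Real.sin (d ψ)
        = h (ψ + Real.pi / 2) * Real.cos (d (ψ + Real.pi / 2))
          + deriv h (ψ + Real.pi / 2) * Real.sin (d (ψ + Real.pi / 2))) :
    (∀ ψ : ℝ, h (ψ + Real.pi / 2) * Real.sin (d ψ) = h ψ * Real.cos (d ψ)) ∧
    (∀ ψ : ℝ, deriv h ψ * Real.sin (d ψ) = -(deriv h (ψ + Real.pi / 2)) * Real.cos (d ψ)) ∧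
    (∃ R2 : ℝ, ∀ ψ : ℝ, (h ψ) ^ 2 + (h (ψ + Real.pi / 2)) ^ 2 = R2) := by
  have hrel : ∀ ψ, h (ψ + π / 2) * sin (d ψ) = h ψ * cos (d ψ) ∧
      deriv h ψ * sin (d ψ) = -deriv h (ψ + π / 2) * cos (d ψ) := fun ψ => by
    have e₁ := heq1 ψ
    have e₂ := heq2 ψ
    rw [hdsym, cos_pi_div_two_sub, sin_pi_div_two_sub] at e₁ e₂
    constructor <;> linarith
  refine ⟨fun ψ => (hrel ψ).1, fun ψ => (hrel ψ).2, ?_⟩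
  exact exists_sq_add_sq_comp_add_eq (hh.differentiable one_ne_zero) (π / 2)
    fun ψ => mul_add_mul_eq_zero_of_mul_sin_eq (hrel ψ).1 (hrel ψ).2

/-- From the two generating-function relations for the sides of the inscribed billiard
parallelogram one deduces the identities of Theorem 4(D). -/
theorem stmt_4 (h d : ℝ → ℝ) (hh : ContDiff ℝ 1 h)
    (hpos : ∀ ψ : ℝ, 0 < h ψ)
    (hd : ∀ ψ : ℝ, 0 < d ψ ∧ d ψ < Real.pi / 2)
    (hdsym : ∀ ψ : ℝ, d (ψ + Real.pi / 2) = Real.pi / 2 - d ψ)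
    (heq1 : ∀ ψ : ℝ,
      h ψ * Real.cos (d ψ) + deriv h ψ * Real.sin (d ψ)
        = h (ψ + Real.pi / 2) * Real.cos (d (ψ + Real.pi / 2))
          - deriv h (ψ + Real.pi / 2) * Real.sin (d (ψ + Real.pi / 2)))
    (heq2 : ∀ ψ : ℝ,
      h ψ * Real.cos (d ψ) - deriv h ψ * Real.sin (d ψ)
        = h (ψ + Real.pi / 2) * Real.cos (d (ψ + Real.pi / 2))
          + deriv h (ψ + Real.pi / 2) * Real.sin (d (ψ + Real.pi / 2))) :
    (∀ ψ : ℝ, h (ψ + Real.pi / 2) * Real.sin (d ψ) = h ψ * Real.cos (d ψ)) ∧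
    (∀ ψ : ℝ, deriv h ψ * Real.sin (d ψ) = -(deriv h (ψ + Real.pi / 2)) * Real.cos (d ψ)) ∧
    (∃ R2 : ℝ, ∀ ψ : ℝ, (h ψ) ^ 2 + (h (ψ + Real.pi / 2)) ^ 2 = R2) :=
  stmt_4_general h d hh hdsym heq1 heq2
end

section
/- Let R > 0 and let d : ℝ → ℝ be a C² function satisfying d(ψ + π/2) = π/2 − d(ψ) for all ψ. Set h = R·(sin ∘ d), μ(ψ) = cos(2·d(ψ)), and define U(ψ) = −h(ψ)·h′(ψ)²·(h(ψ) + h″(ψ))·(d(ψ)/2 − sin(2·d(ψ))/4) + (h″(ψ)·h(ψ)² + 3·h(ψ)·h′(ψ)²)·(h(ψ) + h″(ψ))·(d(ψ)/8 − sin(4·d(ψ))/32). Then ∫₀^π U(ψ) dψ = (π·R⁴/512)·∫₀^π (μ″(ψ)² − 4·μ′(ψ)²) dψ. -/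
/-!
Since `d (ψ + π/2) = π/2 - d ψ`, the functions `d`, `d'`, `d''` and hence `U` are
`π`-periodic, so `∫₀^π U = ½ ∫₀^π (U ψ + U (ψ + π/2))`. Pointwise, `U ψ + U (ψ + π/2)` equals
`(π R⁴ / 256) (μ''² - 4 μ'²)` plus the derivative of a `π`-periodic function of `(d, d')`, whose
integral over a period vanishes. In the variables `x = d ψ`, `p = d' ψ`, `q = d'' ψ` this
pointwise identity is a polynomial identity in `sin x, cos x, x, π, p, q, R` modulo
`sin² x + cos² x = 1`.
-/

open Real Function MeasureTheory

theorem Function.Periodic.of_add_eq_sub {α β : Type*} [AddSemigroup α] [AddCommGroup β]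
    {f : α → β} {a : α} {c : β} (hf : ∀ x, f (x + a) = c - f x) : Periodic f (a + a) :=
  fun x => by rw [← add_assoc, hf, hf, sub_sub_cancel]

section Derivatives

variable {𝕜 F : Type*} [NontriviallyNormedField 𝕜] [NormedAddCommGroup F] [NormedSpace 𝕜 F]
  {f : 𝕜 → F} {a : 𝕜} {c : F}

theorem Function.Antiperiodic.deriv_of_add_eq_sub (hf : ∀ x, f (x + a) = c - f x) :
    Antiperiodic (deriv f) a := fun x => by
  rw [← deriv_comp_add_const, funext hf, deriv_const_sub]

theorem Function.Antiperiodic.deriv (hf : Antiperiodic f a) : Antiperiodic (deriv f) a :=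
  fun x => by rw [← deriv_comp_add_const, hf.funext, deriv.neg]

end Derivatives

theorem Function.Periodic.intervalIntegral_eq_half_of_add_eq {f g Φ Φ' : ℝ → ℝ} {T a : ℝ}
    (hf : Periodic f T) (hf_cont : Continuous f) (hg : IntervalIntegrable g volume 0 T)
    (hΦ : Periodic Φ T) (hΦ' : ∀ t, HasDerivAt Φ (Φ' t) t)
    (hfg : ∀ t, f t + f (t + a) = g t + Φ' t) :
    ∫ t in 0..T, f t = (∫ t in 0..T, g t) / 2 := by
  have hf_int : IntervalIntegrable f volume 0 T := hf_cont.intervalIntegrable _ _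
  have hfa_int : IntervalIntegrable (fun t => f (t + a)) volume 0 T :=
    (hf_cont.comp (continuous_add_const a)).intervalIntegrable _ _
  have hΦ'_int : IntervalIntegrable Φ' volume 0 T := by
    have : Φ' = fun t => f t + f (t + a) - g t := funext fun t => by rw [hfg]; ring
    exact this ▸ (hf_int.add hfa_int).sub hg
  have h_shift : ∫ t in 0..T, f (t + a) = ∫ t in 0..T, f t := by
    rw [intervalIntegral.integral_comp_add_right, zero_add, add_comm T,
      hf.intervalIntegral_add_eq a 0, zero_add]
  have h_boundary : ∫ t in 0..T, Φ' t = 0 := by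
    rw [intervalIntegral.integral_eq_sub_of_hasDerivAt (fun t _ => hΦ' t) hΦ'_int,
      ← zero_add T, hΦ 0, sub_self]
  have h_sum : ∫ t in 0..T, (f t + f (t + a)) = ∫ t in 0..T, (g t + Φ' t) :=
    intervalIntegral.integral_congr fun t _ => hfg t
  rw [intervalIntegral.integral_add hf_int hfa_int, intervalIntegral.integral_add hg hΦ'_int,
    h_shift, h_boundary] at h_sum
  linarith

section SinCos

variable {d : ℝ → ℝ}

theorem deriv_const_mul_sin_comp (R : ℝ) (hd : Differentiable ℝ d) :
    deriv (fun t => R * sin (d t)) = fun t => R * (cos (d t) * deriv d t) :=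
  funext fun t => ((hd t).hasDerivAt.sin.const_mul R).deriv

theorem deriv_deriv_const_mul_sin_comp (R : ℝ) (hd : Differentiable ℝ d)
    (hd' : Differentiable ℝ (deriv d)) :
    deriv (deriv (fun t => R * sin (d t)))
      = fun t => R * (cos (d t) * deriv (deriv d) t - sin (d t) * deriv d t ^ 2) := by
  rw [deriv_const_mul_sin_comp R hd]
  exact funext fun t =>
    (((hd t).hasDerivAt.cos.mul (hd' t).hasDerivAt).const_mul R).deriv.trans (by ring)

theorem deriv_cos_two_mul_comp (hd : Differentiable ℝ d) :
    deriv (fun t => cos (2 * d t)) = fun t => -2 * sin (2 * d t) * deriv d t :=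
  funext fun t => by rw [((hd t).hasDerivAt.const_mul 2).cos.deriv]; ring

theorem deriv_deriv_cos_two_mul_comp (hd : Differentiable ℝ d)
    (hd' : Differentiable ℝ (deriv d)) :
    deriv (deriv (fun t => cos (2 * d t)))
      = fun t =>
        -(4 * cos (2 * d t) * deriv d t ^ 2 + 2 * sin (2 * d t) * deriv (deriv d) t) := by
  rw [deriv_cos_two_mul_comp hd]
  exact funext fun t =>
    ((((hd t).hasDerivAt.const_mul 2).sin.const_mul (-2)).mul (hd' t).hasDerivAt).deriv.trans
      (by ring)

end SinCos

noncomputable section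

/-- `U ψ` in the variables `x = d ψ`, `p = d' ψ`, `q = d'' ψ`; here `h₁ = h'`, `h₂ = h''`. -/
def totalIntegrand (R x p q : ℝ) : ℝ :=
  let h := R * sin x
  let h₁ := R * (cos x * p)
  let h₂ := R * (cos x * q - sin x * p ^ 2)
  (-(h * h₁ ^ 2 * (h + h₂)) * (x / 2 - sin (2 * x) / 4)
    + (h₂ * h ^ 2 + 3 * h * h₁ ^ 2) * (h + h₂) * (x / 8 - sin (4 * x) / 32))

def boundaryTerm (x p : ℝ) : ℝ :=
  sin (2 * x) * (4 * x - sin (4 * x) - π * (1 + cos (2 * x))) * (p - p ^ 3)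
    - π * sin (4 * x) * p ^ 3

def boundaryTermDeriv (x p q : ℝ) : ℝ :=
  (2 * cos (2 * x) * (4 * x - sin (4 * x) - π * (1 + cos (2 * x)))
      + sin (2 * x) * (4 - 4 * cos (4 * x) + 2 * π * sin (2 * x))) * p * (p - p ^ 3)
    + sin (2 * x) * (4 * x - sin (4 * x) - π * (1 + cos (2 * x))) * (q - 3 * p ^ 2 * q)
    - π * (4 * cos (4 * x) * p ^ 4 + 3 * sin (4 * x) * p ^ 2 * q)

end

theorem hasDerivAt_boundaryTerm {x y : ℝ → ℝ} {t q : ℝ} (hx : HasDerivAt x (y t) t)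
    (hy : HasDerivAt y q t) :
    HasDerivAt (fun s => boundaryTerm (x s) (y s)) (boundaryTermDeriv (x t) (y t) q) t := by
  have h2 := hx.const_mul 2
  have h4 := hx.const_mul 4
  have H := ((h2.sin.mul ((h4.sub h4.sin).sub ((h2.cos.const_add 1).const_mul π))).mul
    (hy.sub (hy.pow 3))).sub ((h4.sin.const_mul π).mul (hy.pow 3))
  refine H.congr_deriv ?_
  simp only [boundaryTermDeriv, Pi.mul_apply, Pi.sub_apply, Pi.pow_apply]
  norm_num
  ring

theorem totalIntegrand_add_totalIntegrand_pi_div_two_sub (R x p q : ℝ) :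
    totalIntegrand R x p q + totalIntegrand R (π / 2 - x) (-p) (-q)
      = π * R ^ 4 / 256 * ((-(4 * cos (2 * x) * p ^ 2 + 2 * sin (2 * x) * q)) ^ 2
          - 4 * (-2 * sin (2 * x) * p) ^ 2)
        + R ^ 4 / 64 * boundaryTermDeriv x p q := by
  have h2 : sin (2 * (π / 2 - x)) = sin (2 * x) := by
    rw [← sin_pi_sub]; ring_nf
  have h4 : sin (4 * (π / 2 - x)) = -sin (4 * x) := by
    rw [show 4 * (π / 2 - x) = -(4 * x) + 2 * π by ring, sin_add_two_pi, sin_neg]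
  have s4 : sin (4 * x) = 2 * sin (2 * x) * cos (2 * x) := by
    rw [← sin_two_mul]; ring_nf
  have c4 : cos (4 * x) = 2 * cos (2 * x) ^ 2 - 1 := by
    rw [← cos_two_mul]; ring_nf
  simp only [totalIntegrand, boundaryTermDeriv, sin_pi_div_two_sub, cos_pi_div_two_sub, h2, h4]
  simp only [s4, c4, sin_two_mul, cos_two_mul]
  grind [sin_sq_add_cos_sq x]

theorem stmt_8_general (R : ℝ) (d : ℝ → ℝ) (hd : ContDiff ℝ 2 d)
    (hdsym : ∀ ψ : ℝ, d (ψ + Real.pi / 2) = Real.pi / 2 - d ψ)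
    (h : ℝ → ℝ) (hh : h = fun ψ => R * Real.sin (d ψ))
    (μ : ℝ → ℝ) (hμ : μ = fun ψ => Real.cos (2 * d ψ))
    (U : ℝ → ℝ)
    (hU : ∀ ψ : ℝ, U ψ =
      -(h ψ * (deriv h ψ) ^ 2 * (h ψ + deriv (deriv h) ψ))
          * (d ψ / 2 - Real.sin (2 * d ψ) / 4)
        + (deriv (deriv h) ψ * (h ψ) ^ 2 + 3 * h ψ * (deriv h ψ) ^ 2)
          * (h ψ + deriv (deriv h) ψ)
          * (d ψ / 8 - Real.sin (4 * d ψ) / 32)) :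
    ∫ ψ in (0:ℝ)..Real.pi, U ψ
      = (Real.pi * R ^ 4 / 512)
        * ∫ ψ in (0:ℝ)..Real.pi, ((deriv (deriv μ) ψ) ^ 2 - 4 * (deriv μ ψ) ^ 2) := by
  subst hh hμ
  obtain ⟨hd₁, -, hd'⟩ := contDiff_succ_iff_deriv.mp (show ContDiff ℝ (1 + 1) d from hd)
  have hd₂ : Differentiable ℝ (deriv d) := hd'.differentiable one_ne_zero
  have hd₂_cont : Continuous (deriv (deriv d)) := hd'.continuous_deriv le_rfl
  have hd₁A : Antiperiodic (deriv d) (π / 2) := .deriv_of_add_eq_sub hdsym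
  have hd₂A : Antiperiodic (deriv (deriv d)) (π / 2) := hd₁A.deriv
  have hdP : Periodic d π := add_halves π ▸ .of_add_eq_sub hdsym
  have hd₁P : Periodic (deriv d) π := by
    simpa only [two_nsmul, add_halves] using hd₁A.periodic
  have hd₂P : Periodic (deriv (deriv d)) π := by
    simpa only [two_nsmul, add_halves] using hd₂A.periodic
  have hU_jet : U = fun t => totalIntegrand R (d t) (deriv d t) (deriv (deriv d) t) :=
    funext fun t => by
      rw [hU, deriv_deriv_const_mul_sin_comp R hd₁ hd₂, deriv_const_mul_sin_comp R hd₁]; rfl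
  have h_add_shift (t : ℝ) := by
    have := totalIntegrand_add_totalIntegrand_pi_div_two_sub R (d t) (deriv d t)
      (deriv (deriv d) t)
    rwa [← hdsym, ← hd₁A t, ← hd₂A t] at this
  have hΦ (t : ℝ) :=
    (hasDerivAt_boundaryTerm (hd₁ t).hasDerivAt (hd₂ t).hasDerivAt).const_mul (R ^ 4 / 64)
  rw [hU_jet, deriv_deriv_cos_two_mul_comp hd₁ hd₂, deriv_cos_two_mul_comp hd₁,
    Periodic.intervalIntegral_eq_half_of_add_eq _ _ _ _ hΦ h_add_shift,
    intervalIntegral.integral_const_mul]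
  · ring
  · intro t
    simp only [hdP t, hd₁P t, hd₂P t]
  · simp only [totalIntegrand]
    fun_prop
  · exact Continuous.intervalIntegrable (by fun_prop) _ _
  · intro t
    simp only [hdP t, hd₁P t]

/-- The key identity of the paper: the integral of the total-integrability integrand `U`
equals `(π R⁴ / 512) ∫₀^π (μ''² − 4 μ'²)` with `μ = cos (2 d)`. -/
theorem stmt_8 (R : ℝ) (hR : 0 < R) (d : ℝ → ℝ) (hd : ContDiff ℝ 2 d)
    (hdsym : ∀ ψ : ℝ, d (ψ + Real.pi / 2) = Real.pi / 2 - d ψ)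
    (h : ℝ → ℝ) (hh : h = fun ψ => R * Real.sin (d ψ))
    (μ : ℝ → ℝ) (hμ : μ = fun ψ => Real.cos (2 * d ψ))
    (U : ℝ → ℝ)
    (hU : ∀ ψ : ℝ, U ψ =
      -(h ψ * (deriv h ψ) ^ 2 * (h ψ + deriv (deriv h) ψ))
          * (d ψ / 2 - Real.sin (2 * d ψ) / 4)
        + (deriv (deriv h) ψ * (h ψ) ^ 2 + 3 * h ψ * (deriv h ψ) ^ 2)
          * (h ψ + deriv (deriv h) ψ)
          * (d ψ / 8 - Real.sin (4 * d ψ) / 32)) :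
    ∫ ψ in (0:ℝ)..Real.pi, U ψ
      = (Real.pi * R ^ 4 / 512)
        * ∫ ψ in (0:ℝ)..Real.pi, ((deriv (deriv μ) ψ) ^ 2 - 4 * (deriv μ ψ) ^ 2) :=
  stmt_8_general R d hd hdsym h hh μ hμ U hU
end

section
/- Let μ : ℝ → ℝ be a C² function with μ(ψ + π) = μ(ψ) for all ψ, and suppose ∫₀^π (μ″(ψ)² − 4·μ′(ψ)²) dψ ≤ 0. Then there exist real constants a, b, c such that μ(ψ) = a·cos(2ψ) + b·sin(2ψ) + c for all ψ. -/
/-!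
Apply Wirtinger's inequality to `g = μ'`, which is `π`-periodic with mean zero. For period `π`
the Fourier coefficients satisfy `ĝ'(n) = 2 i n ĝ(n)` and `ĝ(0) = 0`, so by Parseval the
hypothesis becomes `∑ (n² - 1) |ĝ(n)|² ≤ 0`, a sum of nonnegative terms. Hence `ĝ(n) = 0` for
`n ≠ ±1`, so `μ' = p cos 2ψ + q sin 2ψ`, and `μ` is an antiderivative of that.
-/

open Real Function MeasureTheory

theorem exists_eq_cos_add_sin_add_const_of_hasDerivAt {f : ℝ → ℝ} {k p q : ℝ} (hk : k ≠ 0)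
    (hf : ∀ x, HasDerivAt f (p * cos (k * x) + q * sin (k * x)) x) :
    ∃ a b c : ℝ, ∀ x, f x = a * cos (k * x) + b * sin (k * x) + c := by
  set Φ : ℝ → ℝ := fun y => -q / k * cos (k * y) + p / k * sin (k * y)
  have hΦ : ∀ x, HasDerivAt Φ (p * cos (k * x) + q * sin (k * x)) x := fun x => by
    have hkx : HasDerivAt (fun y => k * y) k x := by simpa using (hasDerivAt_id x).const_mul k
    refine ((hkx.cos.const_mul (-q / k)).add (hkx.sin.const_mul (p / k))).congr_deriv ?_
    field_simp
    ring
  have hconst : ∀ x, f x - Φ x = f 0 - Φ 0 := fun x =>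
    is_const_of_deriv_eq_zero (fun x => ((hf x).sub (hΦ x)).differentiableAt)
      (fun x => by simpa using ((hf x).sub (hΦ x)).deriv) x 0
  exact ⟨-q / k, p / k, f 0 - Φ 0, fun x => by rw [← hconst x]; ring⟩

theorem eq_zero_of_hasSum_sq_mul_le {a : ℤ → ℝ} {A B : ℝ} (ha : ∀ n, 0 ≤ a n) (ha0 : a 0 = 0)
    (hA : HasSum a A) (hB : HasSum (fun n : ℤ => (n : ℝ) ^ 2 * a n) B) (hBA : B ≤ A)
    {n : ℤ} (hn : n ∉ ({1, -1} : Finset ℤ)) : a n = 0 := by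
  have hnonneg : ∀ m : ℤ, 0 ≤ ((m : ℝ) ^ 2 - 1) * a m := by
    intro m
    rcases eq_or_ne m 0 with rfl | hm
    · simp [ha0]
    · have : (1 : ℝ) ≤ (m : ℝ) ^ 2 := by
        exact_mod_cast (one_le_sq_iff_one_le_abs m).2 (Int.one_le_abs hm)
      exact mul_nonneg (by linarith) (ha m)
  have hsum : HasSum (fun m : ℤ => ((m : ℝ) ^ 2 - 1) * a m) (B - A) := by
    simpa only [sub_mul, one_mul] using hB.sub hA
  have hzero : B - A = 0 := le_antisymm (by linarith) (hsum.nonneg hnonneg)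
  rw [hzero, hasSum_zero_iff_of_nonneg hnonneg] at hsum
  have hn2 : (n : ℝ) ^ 2 - 1 ≠ 0 := by
    have : n ^ 2 ≠ 1 := by simpa [sq_eq_one_iff] using hn
    exact sub_ne_zero.2 (by exact_mod_cast this)
  exact (mul_eq_zero.1 (congrFun hsum n)).resolve_left hn2

theorem Continuous.hasSum_sq_fourierCoeffOn {a b : ℝ} (hab : a < b) {f : ℝ → ℂ}
    (hf : Continuous f) :
    HasSum (fun n => ‖fourierCoeffOn hab f n‖ ^ 2) ((b - a)⁻¹ • ∫ x in a..b, ‖f x‖ ^ 2) :=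
  _root_.hasSum_sq_fourierCoeffOn hab <|
    (memLp_two_iff_integrable_sq_norm hf.aestronglyMeasurable).2 (hf.norm.pow 2).integrableOn_Ioc

namespace Function.Periodic

variable {T : ℝ}

theorem fourierCoeffOn_of_hasDerivAt (hT : 0 < T) {f f' : ℝ → ℂ} (hper : Periodic f T)
    (hf : ∀ x, HasDerivAt f (f' x) x) (hf' : Continuous f') (n : ℤ) :
    fourierCoeffOn hT f' n = 2 * π * Complex.I * n / T * fourierCoeffOn hT f n := by
  have hfT : f T = f 0 := by simpa using hper 0
  rcases eq_or_ne n 0 with rfl | hn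
  · rw [fourierCoeffOn_eq_integral]
    simp only [neg_zero, fourier_zero, one_smul]
    rw [intervalIntegral.integral_eq_sub_of_hasDerivAt (fun x _ => hf x)
      (hf'.intervalIntegrable 0 T), hfT]
    simp
  · rw [_root_.fourierCoeffOn_of_hasDerivAt hT hn (fun x _ => hf x)
      (hf'.intervalIntegrable 0 T), hfT]
    have : (T : ℂ) ≠ 0 := Complex.ofReal_ne_zero.2 hT.ne'
    field_simp
    push_cast
    ring

theorem fourierCoeff_lift [hT : Fact (0 < T)] {f : ℝ → ℂ} (hper : Periodic f T) (n : ℤ) :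
    fourierCoeff hper.lift n = fourierCoeffOn hT.out f n := by
  rw [fourierCoeff_eq_intervalIntegral _ _ 0, fourierCoeffOn_eq_integral, sub_zero, zero_add]
  simp only [Periodic.lift_coe]

theorem eq_sum_fourier_of_fourierCoeffOn_eq_zero [hT : Fact (0 < T)] {f : ℝ → ℂ}
    (hper : Periodic f T) (hf : Continuous f) {s : Finset ℤ}
    (hs : ∀ n ∉ s, fourierCoeffOn hT.out f n = 0) (x : ℝ) :
    f x = ∑ n ∈ s, fourierCoeffOn hT.out f n * fourier n (x : AddCircle T) := by
  let F : C(AddCircle T, ℂ) := ⟨hper.lift, continuous_coinduced_dom.mpr hf⟩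
  have hcoeff : ∀ n, fourierCoeff F n = fourierCoeffOn hT.out f n := hper.fourierCoeff_lift
  have hsummable : Summable (fourierCoeff F) :=
    summable_of_ne_finset_zero (s := s) fun n hn => by rw [hcoeff, hs n hn]
  have hsupp : ∀ n ∉ s, fourierCoeff F n • fourier n (x : AddCircle T) = 0 := fun n hn => by
    rw [hcoeff, hs n hn, zero_smul]
  have := (has_pointwise_sum_fourier_series_of_summable hsummable x).unique
    (hasSum_sum_of_ne_finset_zero hsupp)
  simpa only [F, ContinuousMap.coe_mk, Periodic.lift_coe, hper.fourierCoeff_lift, smul_eq_mul]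
    using this

theorem fourierCoeffOn_eq_zero_of_integral_deriv_sq_le (hT : 0 < T) {f f' : ℝ → ℂ}
    (hper : Periodic f T) (hf : ∀ x, HasDerivAt f (f' x) x) (hf' : Continuous f')
    (hmean : fourierCoeffOn hT f 0 = 0)
    (hle : ∫ x in 0..T, ‖f' x‖ ^ 2 ≤ (2 * π / T) ^ 2 * ∫ x in 0..T, ‖f x‖ ^ 2)
    {n : ℤ} (hn : n ∉ ({1, -1} : Finset ℤ)) : fourierCoeffOn hT f n = 0 := by
  have hfc : Continuous f := continuous_iff_continuousAt.2 fun x => (hf x).continuousAt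
  have hk : 0 < 2 * π / T := by positivity
  have hnorm : ∀ m : ℤ, ‖fourierCoeffOn hT f' m‖ ^ 2
      = (2 * π / T) ^ 2 * ((m : ℝ) ^ 2 * ‖fourierCoeffOn hT f m‖ ^ 2) := fun m => by
    rw [hper.fourierCoeffOn_of_hasDerivAt hT hf hf' m]
    simp only [Complex.norm_mul, Complex.norm_div, Complex.norm_ofNat, Complex.norm_real,
      norm_eq_abs, abs_of_pos pi_pos, Complex.norm_I, mul_one, Complex.norm_intCast, abs_of_pos hT,
      mul_pow, div_pow, sq_abs]
    ring
  have hA := hfc.hasSum_sq_fourierCoeffOn hT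
  have hB := (hf'.hasSum_sq_fourierCoeffOn hT).div_const ((2 * π / T) ^ 2)
  simp only [hnorm, mul_div_cancel_left₀ _ (pow_ne_zero 2 hk.ne')] at hB
  have hBA : (T - 0)⁻¹ • (∫ x in 0..T, ‖f' x‖ ^ 2) / (2 * π / T) ^ 2
      ≤ (T - 0)⁻¹ • ∫ x in 0..T, ‖f x‖ ^ 2 := by
    rw [smul_eq_mul, smul_eq_mul, mul_div_assoc]
    gcongr
    exact (div_le_iff₀' (by positivity)).2 hle
  simpa using eq_zero_of_hasSum_sq_mul_le (fun m => sq_nonneg _) (by simp [hmean]) hA hB hBA hn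

theorem exists_eq_cos_add_sin_of_integral_deriv_sq_le (hT : 0 < T) {g : ℝ → ℝ}
    (hper : Periodic g T) (hg : ContDiff ℝ 1 g) (hmean : ∫ x in 0..T, g x = 0)
    (hle : ∫ x in 0..T, deriv g x ^ 2 ≤ (2 * π / T) ^ 2 * ∫ x in 0..T, g x ^ 2) :
    ∃ a b : ℝ, ∀ x, g x = a * cos (2 * π / T * x) + b * sin (2 * π / T * x) := by
  have : Fact (0 < T) := ⟨hT⟩
  set G : ℝ → ℂ := fun x => g x
  have hGper : Periodic G T := fun x => by simp [G, hper x]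
  have hGd : ∀ x, HasDerivAt G ((deriv g x : ℝ) : ℂ) x := fun x =>
    (hg.differentiable one_ne_zero x).hasDerivAt.ofReal_comp
  have hG'c : Continuous fun x => ((deriv g x : ℝ) : ℂ) :=
    Complex.continuous_ofReal.comp hg.continuous_deriv_one
  have hmean0 : fourierCoeffOn hT G 0 = 0 := by
    simp [fourierCoeffOn_eq_integral, G, intervalIntegral.integral_ofReal, hmean]
  have hsupp := fun n => hGper.fourierCoeffOn_eq_zero_of_integral_deriv_sq_le hT hGd hG'c hmean0
    (by simpa [G] using hle) (n := n)
  set c := fourierCoeffOn hT G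
  refine ⟨(c 1).re + (c (-1)).re, (c (-1)).im - (c 1).im, fun x => ?_⟩
  have hx := congrArg Complex.re <|
    hGper.eq_sum_fourier_of_fourierCoeffOn_eq_zero (Complex.continuous_ofReal.comp hg.continuous)
      hsupp x
  have harg : ∀ n : ℤ,
      2 * π * Complex.I * n * x / T = ((n * (2 * π / T * x) : ℝ) : ℂ) * Complex.I :=
    fun n => by push_cast; field_simp
  rw [Finset.sum_pair (by decide), fourier_coe_apply, fourier_coe_apply, harg, harg] at hx
  simp only [Complex.add_re, Complex.mul_re, Complex.exp_ofReal_mul_I_re,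
    Complex.exp_ofReal_mul_I_im, Int.cast_one, Int.cast_neg, one_mul, neg_one_mul, cos_neg,
    sin_neg] at hx
  rw [show g x = (G x).re from rfl, hx]
  ring

end Function.Periodic

theorem Function.Periodic.deriv {𝕜 F : Type*} [NontriviallyNormedField 𝕜] [NormedAddCommGroup F]
    [NormedSpace 𝕜 F] {f : 𝕜 → F} {c : 𝕜} (hper : Periodic f c) : Periodic (deriv f) c :=
  fun x => by rw [← deriv_comp_add_const, funext hper]

/-- Equality case of Wirtinger's inequality: a `π`-periodic `C²` function with
`∫₀^π (μ''² − 4 μ'²) ≤ 0` is a pure second harmonic plus a constant. -/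
theorem stmt_12 (μ : ℝ → ℝ) (hμ : ContDiff ℝ 2 μ)
    (hper : ∀ ψ : ℝ, μ (ψ + Real.pi) = μ ψ)
    (hineq : (∫ ψ in (0:ℝ)..Real.pi, ((deriv (deriv μ) ψ) ^ 2 - 4 * (deriv μ ψ) ^ 2)) ≤ 0) :
    ∃ a b c : ℝ, ∀ ψ : ℝ, μ ψ = a * Real.cos (2 * ψ) + b * Real.sin (2 * ψ) + c := by
  have hμ' : ContDiff ℝ 1 (deriv μ) := hμ.deriv'
  have hμd : ∀ x, HasDerivAt μ (deriv μ x) x :=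
    fun x => (hμ.differentiable two_ne_zero x).hasDerivAt
  have hmean : ∫ x in 0..π, deriv μ x = 0 := by
    rw [intervalIntegral.integral_eq_sub_of_hasDerivAt (fun x _ => hμd x)
      (hμ'.continuous.intervalIntegrable 0 π)]
    simpa using sub_eq_zero.2 (hper 0)
  have hle : ∫ x in 0..π, deriv (deriv μ) x ^ 2 ≤ (2 * π / π) ^ 2 * ∫ x in 0..π, deriv μ x ^ 2 := by
    have h1 : IntervalIntegrable (fun x => deriv (deriv μ) x ^ 2) volume 0 π :=
      (hμ'.continuous_deriv_one.pow 2).intervalIntegrable 0 π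
    have h2 : IntervalIntegrable (fun x => 4 * deriv μ x ^ 2) volume 0 π :=
      (continuous_const.mul (hμ'.continuous.pow 2)).intervalIntegrable 0 π
    rw [intervalIntegral.integral_sub h1 h2, intervalIntegral.integral_const_mul] at hineq
    rw [mul_div_cancel_right₀ 2 pi_ne_zero]
    linarith
  obtain ⟨p, q, hpq⟩ := Periodic.exists_eq_cos_add_sin_of_integral_deriv_sq_le pi_pos
    (Periodic.deriv hper) hμ' hmean hle
  rw [mul_div_cancel_right₀ 2 pi_ne_zero] at hpq
  exact exists_eq_cos_add_sin_add_const_of_hasDerivAt two_ne_zero fun x => hpq x ▸ hμd x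
end

section
/- Let d : ℝ → ℝ be a continuous function with 0 < d(ψ) < π/2 and d(ψ + π/2) = π/2 − d(ψ) for all ψ, and suppose there exist constants A ≥ 0 and c ∈ ℝ such that cos(2·d(ψ)) = A·cos(2ψ) + c for all ψ. Then c = 0 and 0 ≤ A < 1. -/
open Real

/-
The reflection `d (ψ + π/2) = π/2 - d ψ` makes `cos (2 d)` change sign under
`ψ ↦ ψ + π/2`, as does `cos (2ψ)`; comparing the representation at `ψ = 0` and `ψ = π/2`
forces `c = 0`, and then `A = cos (2 d 0) < 1` because `2 d 0 ∈ (0, π)`.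
-/

theorem cos_two_mul_pi_div_two_sub (x : ℝ) : cos (2 * (π / 2 - x)) = -cos (2 * x) := by
  rw [show 2 * (π / 2 - x) = π - 2 * x by ring, cos_pi_sub]

theorem cos_two_mul_lt_one {x : ℝ} (hx₀ : 0 < x) (hxπ : x < π) : cos (2 * x) < 1 := by
  have hsin : 0 < sin x := sin_pos_of_pos_of_lt_pi hx₀ hxπ
  rw [cos_two_mul, cos_sq']
  nlinarith

theorem stmt_14_general (d : ℝ → ℝ)
    (hrange : ∀ ψ : ℝ, 0 < d ψ ∧ d ψ < Real.pi / 2)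
    (hdsym : ∀ ψ : ℝ, d (ψ + Real.pi / 2) = Real.pi / 2 - d ψ)
    (A c : ℝ) (hA : 0 ≤ A)
    (hrep : ∀ ψ : ℝ, Real.cos (2 * d ψ) = A * Real.cos (2 * ψ) + c) :
    c = 0 ∧ 0 ≤ A ∧ A < 1 := by
  have hrep₀ : cos (2 * d 0) = A + c := by simpa using hrep 0
  have hrep_quarter : -cos (2 * d 0) = -A + c := by
    have h := hrep (0 + π / 2)
    rwa [hdsym, cos_two_mul_pi_div_two_sub, zero_add, mul_div_cancel₀ π two_ne_zero, cos_pi,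
      mul_neg_one] at h
  have hc : c = 0 := by linarith
  have hlt : cos (2 * d 0) < 1 :=
    cos_two_mul_lt_one (hrange 0).1 (by linarith [(hrange 0).2, pi_pos])
  exact ⟨hc, hA, by linarith⟩

/-- In the representation `cos (2 d(ψ)) = A cos (2ψ) + c`, necessarily `c = 0` and
`0 ≤ A < 1`. -/
theorem stmt_14 (d : ℝ → ℝ) (hd : Continuous d)
    (hrange : ∀ ψ : ℝ, 0 < d ψ ∧ d ψ < Real.pi / 2)
    (hdsym : ∀ ψ : ℝ, d (ψ + Real.pi / 2) = Real.pi / 2 - d ψ)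
    (A c : ℝ) (hA : 0 ≤ A)
    (hrep : ∀ ψ : ℝ, Real.cos (2 * d ψ) = A * Real.cos (2 * ψ) + c) :
    c = 0 ∧ 0 ≤ A ∧ A < 1 :=
  stmt_14_general d hrange hdsym A c hA hrep
end
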